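/- arXiv:2505.14689 — 3 statements merged into one kernel-verified Lean document; each statement's English description precedes it below -/
import Mathlib

section
/- Product probability perturbation bound: let l ≥ 1 be a natural number, let x₀,…,x_{l−1} ∈ (0,1] and y₀,…,y_{l−1} ∈ [0,1], let x = min_i x_i, let h ≥ 0 and γ ≥ 0 with l·γ < x. Then ∏_i x_i y_i − ∏_i ((x_i − l·γ)/(1 + h·l·γ)) · y_i ≤ (∏_i x_i y_i) · (1 − ((1 − l·γ/x)/(1 + h·l·γ))^l). -/
theorem product_probability_perturbation_bound
    (l : ℕ) (hl : 1 ≤ l) (x y : Fin l → ℝ)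
    (hx : ∀ i, 0 < x i ∧ x i ≤ 1) (hy : ∀ i, 0 ≤ y i ∧ y i ≤ 1)
    (xm : ℝ) (hxm_le : ∀ i, xm ≤ x i) (hxm_mem : ∃ i, xm = x i)
    (h γ : ℝ) (hh : 0 ≤ h) (hγ : 0 ≤ γ) (hlt : (l : ℝ) * γ < xm) :
    (∏ i, x i * y i) - (∏ i, ((x i - l * γ) / (1 + h * l * γ)) * y i) ≤
      (∏ i, x i * y i) * (1 - ((1 - l * γ / xm) / (1 + h * l * γ)) ^ l) := by
  have hlγ : 0 ≤ (l : ℝ) * γ := by positivity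
  have hxm0 : 0 < xm := lt_of_le_of_lt hlγ hlt
  have hD : (0:ℝ) < 1 + h * l * γ := by positivity
  set c : ℝ := (1 - l * γ / xm) / (1 + h * l * γ) with hc
  have hc0 : 0 ≤ c := by
    apply div_nonneg _ (le_of_lt hD)
    have : (l : ℝ) * γ / xm < 1 := (div_lt_one hxm0).mpr hlt
    linarith
  have key : ∀ i ∈ Finset.univ, c * (x i * y i) ≤ ((x i - l * γ) / (1 + h * l * γ)) * y i := by
    intro i _
    have hxi := hx i
    have hyi := hy i
    have hxx : xm ≤ x i := hxm_le i
    have h1 : c * x i ≤ (x i - l * γ) / (1 + h * l * γ) := by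
      rw [hc, div_mul_eq_mul_div, div_le_div_iff₀ hD hD]
      have h2 : (l : ℝ) * γ ≤ l * γ * (x i / xm) := by
        have : (1:ℝ) ≤ x i / xm := (one_le_div hxm0).mpr hxx
        nlinarith
      have h3 : (l : ℝ) * γ * (x i / xm) = l * γ / xm * x i := by ring
      nlinarith [h2]
    calc c * (x i * y i) = (c * x i) * y i := by ring
      _ ≤ ((x i - l * γ) / (1 + h * l * γ)) * y i := by
        apply mul_le_mul_of_nonneg_right h1 hyi.1
  have hprod : ∏ i, (c * (x i * y i)) ≤ ∏ i, ((x i - l * γ) / (1 + h * l * γ)) * y i := by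
    apply Finset.prod_le_prod
    · intro i _
      exact mul_nonneg hc0 (mul_nonneg (hx i).1.le (hy i).1)
    · exact key
  have heq : ∏ i, (c * (x i * y i)) = c ^ l * ∏ i, x i * y i := by
    rw [Finset.prod_mul_distrib, Finset.prod_const, Finset.card_univ, Fintype.card_fin]
  rw [heq] at hprod
  nlinarith [hprod]
end

section
/- Expected cost bound for shielded policies (abstract form): let W ≥ 0, |A| ≥ 1, θ > 0, γ > 0 and m ∈ [0,1). If the per-step shielding cost is bounded by W·(|C|·γ + |A|·θ) with expected counter sum E[|C|] ≤ 1/(1−m)², then the expected average cost is at most (1/2)·W·|A|²·θ + W·|A|·γ/(1−m)². Consequently, for every ε > 0 there exist θ, γ > 0 making this bound less than ε. -/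
theorem expected_cost_bound_shielded
    (W A θ γ m EC cost : ℝ)
    (hW : 0 ≤ W) (hA : 1 ≤ A) (hθ : 0 < θ) (hγ : 0 < γ)
    (hm0 : 0 ≤ m) (hm1 : m < 1)
    (hEC0 : 0 ≤ EC) (hEC : EC ≤ 1 / (1 - m) ^ 2)
    (hcost : cost ≤ (1 / 2) * W * A * (EC * γ + A * θ)) :
    cost ≤ (1 / 2) * W * A ^ 2 * θ + W * A * γ / (1 - m) ^ 2 ∧
    ∀ ε > 0, ∃ θ' > 0, ∃ γ' > 0,
      (1 / 2) * W * A ^ 2 * θ' + W * A * γ' / (1 - m) ^ 2 < ε := by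
  have hD : (0:ℝ) < (1 - m) ^ 2 := pow_pos (by linarith) 2
  constructor
  · have h1 : EC * γ ≤ γ / (1 - m) ^ 2 := by
      rw [div_eq_mul_inv, mul_comm γ]
      apply mul_le_mul_of_nonneg_right _ hγ.le
      rwa [one_div] at hEC
    have hWA : 0 ≤ W * A := by nlinarith
    calc cost ≤ (1 / 2) * W * A * (EC * γ + A * θ) := hcost
      _ = (1 / 2) * W * A ^ 2 * θ + (1/2) * (W * A * (EC * γ)) := by ring
      _ ≤ (1 / 2) * W * A ^ 2 * θ + W * A * γ / (1 - m) ^ 2 := by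
          have : W * A * (EC * γ) ≤ W * A * (γ / (1 - m) ^ 2) :=
            mul_le_mul_of_nonneg_left h1 hWA
          have h2 : 0 ≤ W * A * (γ / (1 - m) ^ 2) := by positivity
          rw [mul_div_assoc]
          nlinarith
  · intro ε hε
    set t := ε / (W * A ^ 2 + 1) with ht_def
    set g := ε * (1 - m) ^ 2 / (4 * (W * A + 1)) with hg_def
    have hP : (0:ℝ) < W * A ^ 2 + 1 := by positivity
    have hQ : (0:ℝ) < 4 * (W * A + 1) := by nlinarith
    have ht : 0 < t := by positivity
    have hg : 0 < g := div_pos (by positivity) hQ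
    have hte : t * (W * A ^ 2 + 1) = ε := div_mul_cancel₀ ε hP.ne'
    have hge : g * (4 * (W * A + 1)) = ε * (1 - m) ^ 2 := div_mul_cancel₀ _ hQ.ne'
    refine ⟨t, ht, g, hg, ?_⟩
    have h1 : (1 / 2) * W * A ^ 2 * t < ε / 2 := by nlinarith
    have h2 : W * A * g / (1 - m) ^ 2 < ε / 2 := by
      rw [div_lt_iff₀ hD]
      nlinarith
    linarith
end

section
/- If an infinite sequence ρ over states visits a set T at least once in every window of L consecutive positions (L ≥ 1), then limsup_{l→∞} (1/l)·|{i ≤ l : ρ[i] ∈ T}| ≥ 1/L. -/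
open Filter in
theorem freq_lower_bound_of_window_visits
    {Q : Type*} (ρ : ℕ → Q) (T : Set Q) [DecidablePred (· ∈ T)]
    (L : ℕ) (hL : 1 ≤ L)
    (hvisit : ∀ k : ℕ, ∃ i : ℕ, k ≤ i ∧ i < k + L ∧ ρ i ∈ T) :
    (1 : ℝ) / L ≤
      Filter.limsup
        (fun l : ℕ =>
          (((Finset.range (l + 1)).filter (fun i => ρ i ∈ T)).card : ℝ) / l)
        Filter.atTop := by
  choose g hg1 hg2 hg3 using hvisit
  have key : ∀ m : ℕ, m ≤ ((Finset.range (m * L)).filter (fun i => ρ i ∈ T)).card := by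
    intro m
    have : (Finset.range m).card ≤
        ((Finset.range (m * L)).filter (fun i => ρ i ∈ T)).card := by
      apply Finset.card_le_card_of_injOn (fun j => g (j * L))
      · intro j hj
        simp only [Finset.mem_coe, Finset.mem_range] at hj
        simp only [Finset.mem_coe, Finset.mem_filter, Finset.mem_range]
        refine ⟨lt_of_lt_of_le (hg2 (j * L)) ?_, hg3 _⟩
        have : j + 1 ≤ m := hj
        calc j * L + L = (j + 1) * L := by ring
          _ ≤ m * L := Nat.mul_le_mul_right L this
      · intro j hj k hk hjk
        simp only at hjk
        by_contra hne
        rcases Nat.lt_or_ge j k with h | h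
        · have h1 := hg1 (k * L)
          have h2 := hg2 (j * L)
          have : j * L + L ≤ k * L := by
            calc j * L + L = (j + 1) * L := by ring
              _ ≤ k * L := Nat.mul_le_mul_right L h
          omega
        · have h' : k < j := lt_of_le_of_ne h (Ne.symm hne)
          have h1 := hg1 (j * L)
          have h2 := hg2 (k * L)
          have : k * L + L ≤ j * L := by
            calc k * L + L = (k + 1) * L := by ring
              _ ≤ j * L := Nat.mul_le_mul_right L h'
          omega
    simpa using this
  have hLpos : (0 : ℝ) < L := by exact_mod_cast hL
  apply le_limsup_of_frequently_le
  · rw [Filter.frequently_atTop]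
    intro N
    refine ⟨(max N 1) * L, ?_, ?_⟩
    · calc N ≤ max N 1 := le_max_left _ _
        _ = (max N 1) * 1 := (mul_one _).symm
        _ ≤ (max N 1) * L := Nat.mul_le_mul_left _ hL
    · set m := max N 1 with hm
      have hm1 : 1 ≤ m := le_max_right _ _
      have hcard : (m : ℝ) ≤
          (((Finset.range (m * L + 1)).filter (fun i => ρ i ∈ T)).card : ℝ) := by
        have := key m
        have hsub : ((Finset.range (m * L)).filter (fun i => ρ i ∈ T)).card ≤
            ((Finset.range (m * L + 1)).filter (fun i => ρ i ∈ T)).card := by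
          apply Finset.card_le_card
          apply Finset.filter_subset_filter
          exact Finset.range_subset_range.mpr (Nat.le_succ _)
        exact_mod_cast le_trans this hsub
      have hml : (0 : ℝ) < (m * L : ℕ) := by
        have : 1 ≤ m * L := Nat.one_le_iff_ne_zero.mpr (by positivity)
        exact_mod_cast this
      rw [div_le_div_iff₀ hLpos hml]
      push_cast
      nlinarith [hcard, hLpos]
  · refine ⟨2, ?_⟩
    rw [Filter.eventually_map, Filter.eventually_atTop]
    refine ⟨1, fun l hl => ?_⟩
    have hlpos : (0 : ℝ) < l := by exact_mod_cast hl
    dsimp only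
    rw [div_le_iff₀ hlpos]
    have : (((Finset.range (l + 1)).filter (fun i => ρ i ∈ T)).card : ℝ) ≤ (l + 1 : ℕ) := by
      exact_mod_cast le_trans (Finset.card_filter_le _ _) (le_of_eq (Finset.card_range _))
    have h1r : (1 : ℝ) ≤ l := by exact_mod_cast hl
    have h2 : ((l + 1 : ℕ) : ℝ) ≤ 2 * l := by
      push_cast; linarith
    linarith
end
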